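/- Suppose 0 < |u⁺| < c_s(ρ⁺), where ρ⁺ = (V⁺)². Then g'(V⁺) > 0, there exists a unique V₂ ∈ (0, V⁺) with g(V₂) = 0, the only zeros of g on (0,∞) are V₂ and V⁺, and there exists V* ∈ (0, V₂) such that G(V*) = G(V⁺), with G(V) < G(V⁺) for 0 < V < V* and G(V) > G(V⁺) for V* < V < V⁺. -/

import Mathlib

/-!
Write `g V = V · b(V)`, where `b` is the Bernoulli function `u²/2 + h(ρ)` at `ρ = V²`,
`u = -C₁/ρ`, shifted by `C₂` so that `b(V⁺) = 0`. Its derivative has the sign of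
`γ ρ^(γ+1) - C₁² = ρ² (c_s(ρ)² - u²)`, so `b` decreases and then increases, with its minimum
strictly before `V⁺` exactly in the subsonic regime; since `b → +∞` at `0`, it has one more
zero `V₂ < V⁺`. Then `G' = V b / k²` is positive on `(0, V₂)` and negative on `(V₂, V⁺)`, and
`G → -∞` at `0` because of the term `-C₁²/(4k²V²)`, so `G` crosses the level `G(V⁺)` exactly
once, at a point `V* < V₂`.
-/

open Real

/-- Enthalpy: `h(ρ) = ln ρ` if `γ = 1`, `h(ρ) = (γ/(γ-1)) ρ^(γ-1)` if `γ > 1`. -/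
noncomputable def enth (γ ρ : ℝ) : ℝ :=
  if γ = 1 then Real.log ρ else (γ / (γ - 1)) * ρ ^ (γ - 1)

open Set Filter Topology

theorem strictMonoOn_of_hasDerivAt_pos {f f' : ℝ → ℝ} {D : Set ℝ} (hD : Convex ℝ D)
    (hf : ∀ x ∈ D, HasDerivAt f (f' x) x) (hf' : ∀ x ∈ interior D, 0 < f' x) :
    StrictMonoOn f D :=
  strictMonoOn_of_hasDerivWithinAt_pos hD (fun x hx ↦ (hf x hx).continuousAt.continuousWithinAt)
    (fun x hx ↦ (hf x (interior_subset hx)).hasDerivWithinAt) hf'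

theorem strictAntiOn_of_hasDerivAt_neg {f f' : ℝ → ℝ} {D : Set ℝ} (hD : Convex ℝ D)
    (hf : ∀ x ∈ D, HasDerivAt f (f' x) x) (hf' : ∀ x ∈ interior D, f' x < 0) :
    StrictAntiOn f D :=
  strictAntiOn_of_hasDerivWithinAt_neg hD (fun x hx ↦ (hf x hx).continuousAt.continuousWithinAt)
    (fun x hx ↦ (hf x (interior_subset hx)).hasDerivWithinAt) hf'

theorem exists_zero_of_valley {φ φ' : ℝ → ℝ} {m p : ℝ} (hm : 0 < m) (hmp : m < p)
    (hφ : ∀ x, 0 < x → HasDerivAt φ (φ' x) x)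
    (hφ'_neg : ∀ x, 0 < x → x < m → φ' x < 0) (hφ'_pos : ∀ x, m < x → 0 < φ' x)
    (hp : φ p = 0) (hlim : Tendsto φ (𝓝[>] 0) atTop) :
    ∃ z ∈ Ioo 0 p, φ z = 0 ∧ (∀ x ∈ Ioo 0 z, 0 < φ x) ∧ (∀ x ∈ Ioo z p, φ x < 0) ∧
      ∀ x, 0 < x → φ x = 0 → x = z ∨ x = p := by
  have hanti : StrictAntiOn φ (Ioc 0 m) := strictAntiOn_of_hasDerivAt_neg (convex_Ioc 0 m)
    (fun x hx ↦ hφ x hx.1) (fun x hx ↦ by rw [interior_Ioc] at hx; exact hφ'_neg x hx.1 hx.2)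
  have hmono : StrictMonoOn φ (Ici m) := strictMonoOn_of_hasDerivAt_pos (convex_Ici m)
    (fun x hx ↦ hφ x (hm.trans_le hx)) (fun x hx ↦ by rw [interior_Ici] at hx; exact hφ'_pos x hx)
  have hφm : φ m < 0 := hp ▸ hmono self_mem_Ici (mem_Ici.2 hmp.le) hmp
  obtain ⟨a, hφa, ha⟩ : ∃ a, 0 < φ a ∧ a ∈ Ioo 0 m :=
    ((hlim.eventually_gt_atTop 0).and (Ioo_mem_nhdsGT hm)).exists
  obtain ⟨z, hz, hφz⟩ : ∃ z ∈ Ioo a m, φ z = 0 :=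
    intermediate_value_Ioo' ha.2.le
      (fun x hx ↦ (hφ x (ha.1.trans_le hx.1)).continuousAt.continuousWithinAt) ⟨hφm, hφa⟩
  have hz0 : 0 < z := ha.1.trans hz.1
  have hzm : z ∈ Ioc 0 m := ⟨hz0, hz.2.le⟩
  have pos_below : ∀ x ∈ Ioo 0 z, 0 < φ x := fun x hx ↦
    hφz ▸ hanti ⟨hx.1, hx.2.le.trans hzm.2⟩ hzm hx.2
  have neg_between : ∀ x ∈ Ioo z p, φ x < 0 := by
    rintro x ⟨hzx, hxp⟩
    rcases le_or_gt x m with hxm | hmx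
    · exact hφz ▸ hanti hzm ⟨hz0.trans hzx, hxm⟩ hzx
    · exact hp ▸ hmono (mem_Ici.2 hmx.le) (mem_Ici.2 (hmx.trans hxp).le) hxp
  have pos_above : ∀ x, p < x → 0 < φ x := fun x hx ↦
    hp ▸ hmono (mem_Ici.2 hmp.le) (mem_Ici.2 (hmp.trans hx).le) hx
  refine ⟨z, ⟨hz0, hz.2.trans hmp⟩, hφz, pos_below, neg_between, fun x hx hφx ↦ ?_⟩
  rcases lt_trichotomy x z with hxz | rfl | hzx
  · exact absurd hφx (pos_below x ⟨hx, hxz⟩).ne'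
  · exact Or.inl rfl
  rcases lt_trichotomy x p with hxp | rfl | hpx
  · exact absurd hφx (neg_between x ⟨hzx, hxp⟩).ne
  · exact Or.inr rfl
  · exact absurd hφx (pos_above x hpx).ne'

theorem exists_level_crossing_of_peak {G G' : ℝ → ℝ} {z p : ℝ} (hz : 0 < z) (hzp : z < p)
    (hG : ∀ x, 0 < x → HasDerivAt G (G' x) x)
    (hG'_pos : ∀ x ∈ Ioo 0 z, 0 < G' x) (hG'_neg : ∀ x ∈ Ioo z p, G' x < 0)
    (hlim : Tendsto G (𝓝[>] 0) atBot) :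
    ∃ s ∈ Ioo 0 z, G s = G p ∧ (∀ x, 0 < x → x < s → G x < G p) ∧
      ∀ x, s < x → x < p → G p < G x := by
  have hmono : StrictMonoOn G (Ioc 0 z) := strictMonoOn_of_hasDerivAt_pos (convex_Ioc 0 z)
    (fun x hx ↦ hG x hx.1) (fun x hx ↦ by rw [interior_Ioc] at hx; exact hG'_pos x hx)
  have hanti : StrictAntiOn G (Icc z p) := strictAntiOn_of_hasDerivAt_neg (convex_Icc z p)
    (fun x hx ↦ hG x (hz.trans_le hx.1)) (fun x hx ↦ by rw [interior_Icc] at hx; exact hG'_neg x hx)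
  have hGz : G p < G z := hanti (left_mem_Icc.2 hzp.le) (right_mem_Icc.2 hzp.le) hzp
  obtain ⟨b, hGb, hb⟩ : ∃ b, G b < G p ∧ b ∈ Ioo 0 z :=
    ((hlim.eventually_lt_atBot (G p)).and (Ioo_mem_nhdsGT hz)).exists
  obtain ⟨s, hs, hGs⟩ : ∃ s ∈ Ioo b z, G s = G p :=
    intermediate_value_Ioo hb.2.le
      (fun x hx ↦ (hG x (hb.1.trans_le hx.1)).continuousAt.continuousWithinAt) ⟨hGb, hGz⟩
  have hs0 : 0 < s := hb.1.trans hs.1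
  have hsz : s ∈ Ioc 0 z := ⟨hs0, hs.2.le⟩
  refine ⟨s, ⟨hs0, hs.2⟩, hGs, fun x hx hxs ↦ hGs ▸ hmono ⟨hx, (hxs.trans hs.2).le⟩ hsz hxs,
    fun x hsx hxp ↦ ?_⟩
  rcases le_or_gt x z with hxz | hzx
  · exact hGs ▸ hmono hsz ⟨hs0.trans hsx, hxz⟩ hsx
  · exact hanti ⟨hzx.le, hxp.le⟩ (right_mem_Icc.2 hzp.le) hxp

theorem exists_threshold_rpow_sq {γ c V : ℝ} (hγ : 0 < γ) (hc : 0 < c) (hV : 0 < V)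
    (hcV : c < γ * (V ^ 2) ^ (γ + 1)) :
    ∃ m ∈ Ioo 0 V, (∀ x, 0 < x → x < m → γ * (x ^ 2) ^ (γ + 1) < c) ∧
      ∀ x, m < x → c < γ * (x ^ 2) ^ (γ + 1) := by
  set f : ℝ → ℝ := fun x ↦ γ * (x ^ 2) ^ (γ + 1)
  have hf : StrictMonoOn f (Ici 0) := fun x hx y _ hxy ↦
    mul_lt_mul_of_pos_left (rpow_lt_rpow (sq_nonneg x)
      (pow_lt_pow_left₀ hxy hx two_ne_zero) (by linarith)) hγ
  set m := √((c / γ) ^ (γ + 1)⁻¹)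
  have hm : 0 < m := sqrt_pos.2 (rpow_pos_of_pos (div_pos hc hγ) _)
  have hfm : f m = c := by
    simp only [f, m]
    rw [sq_sqrt (rpow_nonneg (div_pos hc hγ).le _), rpow_inv_rpow (div_pos hc hγ).le (by linarith),
      mul_div_cancel₀ _ hγ.ne']
  refine ⟨m, ⟨hm, ?_⟩, fun x hx hxm ↦ hfm ▸ hf hx.le hm.le hxm,
    fun x hmx ↦ hfm ▸ hf hm.le (hm.trans hmx).le hmx⟩
  exact (hf.lt_iff_lt hm.le hV.le).1 (hfm ▸ hcV)

theorem sq_mul_sq_lt_of_abs_lt_sqrt {γ u V : ℝ} (hV : 0 < V)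
    (hu : |u| < √(γ * (V ^ 2) ^ (γ - 1))) : (u * V ^ 2) ^ 2 < γ * (V ^ 2) ^ (γ + 1) := by
  have hu2 := (lt_sqrt (abs_nonneg u)).1 hu
  rw [sq_abs] at hu2
  have hpow : (V ^ 2) ^ (γ + 1) = (V ^ 2) ^ (γ - 1) * (V ^ 2) ^ 2 := by
    rw [← rpow_add_natCast (by positivity)]
    congr 1
    push_cast
    ring
  rw [hpow, mul_pow, ← mul_assoc]
  exact mul_lt_mul_of_pos_right hu2 (by positivity)

section Enthalpy

variable {γ ρ : ℝ}

theorem hasDerivAt_enth (hγ : 1 ≤ γ) (hρ : 0 < ρ) : HasDerivAt (enth γ) (γ * ρ ^ (γ - 2)) ρ := by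
  rcases hγ.eq_or_lt with rfl | hγ
  · have : enth 1 = log := funext fun _ ↦ if_pos rfl
    rw [this]
    refine (hasDerivAt_log hρ.ne').congr_deriv ?_
    norm_num [rpow_neg_one]
  · have : enth γ = fun ρ ↦ γ / (γ - 1) * ρ ^ (γ - 1) := funext fun _ ↦ if_neg hγ.ne'
    rw [this]
    refine ((hasDerivAt_rpow_const (p := γ - 1) (Or.inl hρ.ne')).const_mul
      (γ / (γ - 1))).congr_deriv ?_
    rw [show γ - 1 - 1 = γ - 2 by ring]
    field_simp [(sub_pos.2 hγ).ne']

theorem neg_inv_le_enth (hγ : 1 ≤ γ) (hρ : 0 < ρ) : -ρ⁻¹ ≤ enth γ ρ := by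
  rcases hγ.eq_or_lt with rfl | hγ
  · rw [enth, if_pos rfl]
    linarith [one_sub_inv_le_log_of_pos hρ]
  · rw [enth, if_neg hγ.ne']
    have : 0 ≤ γ / (γ - 1) * ρ ^ (γ - 1) :=
      mul_nonneg (div_nonneg (by linarith) (by linarith)) (rpow_nonneg hρ.le _)
    linarith [inv_pos.2 hρ]

end Enthalpy

noncomputable def bernoulliGap (γ C₁ C₂ V : ℝ) : ℝ :=
  C₁ ^ 2 / (2 * V ^ 4) + enth γ (V ^ 2) + C₂

noncomputable def potential (γ k C₁ C₂ V : ℝ) : ℝ :=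
  if γ = 1 then
    (1 / k ^ 2) * (-C₁ ^ 2 / (4 * V ^ 2) + (1 / 2) * (C₂ - 1) * V ^ 2 +
      (1 / 2) * V ^ 2 * Real.log (V ^ 2))
  else
    (1 / (4 * k ^ 2)) * (-C₁ ^ 2 / V ^ 2 + 2 * C₂ * V ^ 2 + (2 / (γ - 1)) * V ^ (2 * γ))

section Profile

variable {γ k C₁ C₂ V : ℝ}

theorem hasDerivAt_bernoulliGap (hγ : 1 ≤ γ) (hV : 0 < V) :
    HasDerivAt (bernoulliGap γ C₁ C₂) (2 * (γ * (V ^ 2) ^ (γ + 1) - C₁ ^ 2) / V ^ 5) V := by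
  have hsq : HasDerivAt (fun V : ℝ ↦ V ^ 2) (2 * V) V := by simpa using hasDerivAt_pow 2 V
  have hkin : HasDerivAt (fun V : ℝ ↦ C₁ ^ 2 / (2 * V ^ 4)) (-2 * C₁ ^ 2 / V ^ 5) V := by
    refine ((hasDerivAt_const V (C₁ ^ 2)).div ((hasDerivAt_pow 4 V).const_mul 2)
      (by positivity)).congr_deriv ?_
    field_simp
    ring
  have hpow : (V ^ 2) ^ (γ + 1) = (V ^ 2) ^ (γ - 2) * (V ^ 2) ^ 3 := by
    rw [← rpow_add_natCast (by positivity)]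
    congr 1
    push_cast
    ring
  refine ((hkin.add (HasDerivAt.comp (h₂ := enth γ) (h := fun V : ℝ ↦ V ^ 2) V
    (hasDerivAt_enth hγ (pow_pos hV 2)) hsq)).add_const C₂).congr_deriv ?_
  rw [hpow]
  field_simp
  ring

theorem tendsto_bernoulliGap_nhdsGT_zero (hγ : 1 ≤ γ) (hC₁ : C₁ ≠ 0) :
    Tendsto (bernoulliGap γ C₁ C₂) (𝓝[>] 0) atTop := by
  have hlower : Tendsto (fun V : ℝ ↦ C₁ ^ 2 / 4 * V⁻¹ ^ 4 + (C₂ - (C₁ ^ 2)⁻¹)) (𝓝[>] 0) atTop :=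
    (((tendsto_pow_atTop four_ne_zero).const_mul_atTop (by positivity)).atTop_add
      tendsto_const_nhds).comp tendsto_inv_nhdsGT_zero
  refine tendsto_atTop_mono' _ (eventually_mem_nhdsWithin.mono fun V (hV : 0 < V) ↦ ?_) hlower
  have henth := neg_inv_le_enth hγ (pow_pos hV 2)
  have hsquare : C₁ ^ 2 / (2 * V ^ 4) - (V ^ 2)⁻¹ - (C₁ ^ 2 / 4 * V⁻¹ ^ 4 - (C₁ ^ 2)⁻¹) =
      (C₁ * V⁻¹ ^ 2 / 2 - C₁⁻¹) ^ 2 := by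
    field_simp
    ring
  rw [bernoulliGap]
  linarith [sq_nonneg (C₁ * V⁻¹ ^ 2 / 2 - C₁⁻¹)]

theorem exists_zero_bernoulliGap (hγ : 1 ≤ γ) (hC₁ : C₁ ≠ 0) (hV : 0 < V)
    (hsub : C₁ ^ 2 < γ * (V ^ 2) ^ (γ + 1)) (hzero : bernoulliGap γ C₁ C₂ V = 0) :
    ∃ z ∈ Ioo 0 V, bernoulliGap γ C₁ C₂ z = 0 ∧ (∀ x ∈ Ioo 0 z, 0 < bernoulliGap γ C₁ C₂ x) ∧
      (∀ x ∈ Ioo z V, bernoulliGap γ C₁ C₂ x < 0) ∧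
      ∀ x, 0 < x → bernoulliGap γ C₁ C₂ x = 0 → x = z ∨ x = V := by
  obtain ⟨m, hm, hbelow, habove⟩ :=
    exists_threshold_rpow_sq (by linarith) (by positivity) hV hsub
  exact exists_zero_of_valley hm.1 hm.2 (fun x hx ↦ hasDerivAt_bernoulliGap hγ hx)
    (fun x hx hxm ↦ div_neg_of_neg_of_pos (by linarith [hbelow x hx hxm]) (by positivity))
    (fun x hmx ↦ div_pos (by linarith [habove x hmx]) (pow_pos (hm.1.trans hmx) 5))
    hzero (tendsto_bernoulliGap_nhdsGT_zero hγ hC₁)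

theorem hasDerivAt_potential (hγ : 1 ≤ γ) (hV : 0 < V) :
    HasDerivAt (potential γ k C₁ C₂) (V * bernoulliGap γ C₁ C₂ V / k ^ 2) V := by
  have hsq : HasDerivAt (fun V : ℝ ↦ V ^ 2) (2 * V) V := by simpa using hasDerivAt_pow 2 V
  rw [div_eq_mul_inv, mul_comm, ← one_div]
  rcases hγ.eq_or_lt with rfl | hγ
  · have : potential 1 k C₁ C₂ = fun V ↦ (1 / k ^ 2) * (-C₁ ^ 2 / (4 * V ^ 2) +
        (1 / 2) * (C₂ - 1) * V ^ 2 + (1 / 2) * V ^ 2 * Real.log (V ^ 2)) :=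
      funext fun _ ↦ if_pos rfl
    rw [this]
    refine HasDerivAt.const_mul _ ?_
    refine ((((hasDerivAt_const V (-C₁ ^ 2)).div (hsq.const_mul 4) (by positivity)).add
      (hsq.const_mul ((1 / 2) * (C₂ - 1)))).add
      ((hsq.const_mul (1 / 2)).mul (hsq.log (by positivity)))).congr_deriv ?_
    rw [bernoulliGap, enth, if_pos rfl]
    field_simp
    ring
  · have : potential γ k C₁ C₂ = fun V ↦ (1 / (4 * k ^ 2)) * (-C₁ ^ 2 / V ^ 2 +
        2 * C₂ * V ^ 2 + (2 / (γ - 1)) * V ^ (2 * γ)) :=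
      funext fun _ ↦ if_neg hγ.ne'
    rw [this]
    refine ((((hasDerivAt_const V (-C₁ ^ 2)).div hsq (by positivity)).add
      (hsq.const_mul (2 * C₂))).add
      ((hasDerivAt_rpow_const (p := 2 * γ) (Or.inl hV.ne')).const_mul (2 / (γ - 1)))).const_mul
      _ |>.congr_deriv ?_
    have hpow : V ^ (2 * γ - 1) = V * (V ^ 2) ^ (γ - 1) := by
      rw [show 2 * γ - 1 = (2 : ℕ) * (γ - 1) + 1 by push_cast; ring, rpow_add_one hV.ne',
        rpow_natCast_mul hV.le, mul_comm]
    rw [bernoulliGap, enth, if_neg hγ.ne', hpow]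
    field_simp [(sub_pos.2 hγ).ne']
    ring

theorem tendsto_potential_nhdsGT_zero (hγ : 1 ≤ γ) (hk : k ≠ 0) (hC₁ : C₁ ≠ 0) :
    Tendsto (potential γ k C₁ C₂) (𝓝[>] 0) atBot := by
  obtain ⟨R, hR, hpot⟩ : ∃ R : ℝ → ℝ, Continuous R ∧
      potential γ k C₁ C₂ = fun V ↦ -(C₁ ^ 2 / (4 * k ^ 2)) * V⁻¹ ^ 2 + R V := by
    rcases hγ.eq_or_lt with rfl | hγ
    · refine ⟨fun V ↦ 1 / k ^ 2 * ((1 / 2) * (C₂ - 1) * V ^ 2 + (1 / 2) * (V ^ 2 * log (V ^ 2))),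
        ?_, funext fun V ↦ ?_⟩
      · have := continuous_mul_log.comp (continuous_pow 2)
        fun_prop
      · simp only [potential, if_pos]
        ring
    · refine ⟨fun V ↦ 1 / (4 * k ^ 2) * (2 * C₂ * V ^ 2 + (2 / (γ - 1)) * V ^ (2 * γ)),
        ?_, funext fun V ↦ ?_⟩
      · have := continuous_rpow_const (q := 2 * γ) (by linarith)
        fun_prop
      · simp only [potential, if_neg hγ.ne']
        ring
  rw [hpot]
  exact (((tendsto_pow_atTop two_ne_zero).comp tendsto_inv_nhdsGT_zero).const_mul_atTop_of_neg
    (neg_neg_of_pos (by positivity))).atBot_add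
    ((hR.tendsto 0).mono_left nhdsWithin_le_nhds)

end Profile

/-- In the subsonic regime `0 < |u⁺| < c_s(ρ⁺)` one has `g'(V⁺) > 0`, there is a unique
second zero `V₂ ∈ (0, V⁺)` of `g`, and a point `V* ∈ (0, V₂)` where `G(V*) = G(V⁺)`,
with `G < G(V⁺)` on `(0, V*)` and `G > G(V⁺)` on `(V*, V⁺)`. -/
theorem subsonic_structure_nonlinear_viscosity
    (γ k Vp up : ℝ) (hγ : 1 ≤ γ) (hk : 0 < k) (hVp : 0 < Vp)
    (C₁ C₂ : ℝ) (hC₁ : C₁ = -up * Vp ^ 2)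
    (hC₂ : C₂ = -up ^ 2 / 2 - enth γ (Vp ^ 2))
    (g : ℝ → ℝ)
    (hg : ∀ V : ℝ, 0 < V → g V = (C₁ ^ 2 / (2 * V ^ 4) + enth γ (V ^ 2) + C₂) * V)
    (G : ℝ → ℝ)
    (hG : ∀ V : ℝ, 0 < V → G V =
      if γ = 1 then
        (1 / k ^ 2) * (-C₁ ^ 2 / (4 * V ^ 2) + (1 / 2) * (C₂ - 1) * V ^ 2 +
          (1 / 2) * V ^ 2 * Real.log (V ^ 2))
      else
        (1 / (4 * k ^ 2)) * (-C₁ ^ 2 / V ^ 2 + 2 * C₂ * V ^ 2 +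
          (2 / (γ - 1)) * V ^ (2 * γ)))
    (hu0 : 0 < |up|) (hu1 : |up| < Real.sqrt (γ * (Vp ^ 2) ^ (γ - 1))) :
    0 < deriv g Vp ∧
    ∃ V₂, V₂ ∈ Set.Ioo 0 Vp ∧ g V₂ = 0 ∧
      (∀ V : ℝ, 0 < V → g V = 0 → V = V₂ ∨ V = Vp) ∧
      ∃ Vs, Vs ∈ Set.Ioo 0 V₂ ∧ G Vs = G Vp ∧
        (∀ V : ℝ, 0 < V → V < Vs → G V < G Vp) ∧
        (∀ V : ℝ, Vs < V → V < Vp → G Vp < G V) := by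
  have hC₁0 : C₁ ≠ 0 := hC₁ ▸ mul_ne_zero (neg_ne_zero.2 (abs_pos.1 hu0)) (by positivity)
  have hsub : C₁ ^ 2 < γ * (Vp ^ 2) ^ (γ + 1) := by
    rw [hC₁, neg_mul, neg_sq]
    exact sq_mul_sq_lt_of_abs_lt_sqrt hVp hu1
  have hzero : bernoulliGap γ C₁ C₂ Vp = 0 := by
    rw [bernoulliGap, hC₁, hC₂]
    field_simp
    ring
  obtain ⟨V₂, hV₂, hzero₂, hpos, hneg, hzeros⟩ := exists_zero_bernoulliGap hγ hC₁0 hVp hsub hzero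
  have hgV : ∀ V, 0 < V → g V = V * bernoulliGap γ C₁ C₂ V := fun V hV ↦
    (hg V hV).trans (mul_comm _ _)
  have hg' := ((hasDerivAt_id' Vp).mul (hasDerivAt_bernoulliGap hγ hVp)).congr_of_eventuallyEq
    ((eventually_gt_nhds hVp).mono hgV)
  have hG' : ∀ V, 0 < V → HasDerivAt G (V * bernoulliGap γ C₁ C₂ V / k ^ 2) V := fun V hV ↦
    (hasDerivAt_potential hγ hV).congr_of_eventuallyEq ((eventually_gt_nhds hV).mono hG)
  have hGlim : Tendsto G (𝓝[>] 0) atBot := (tendsto_potential_nhdsGT_zero hγ hk.ne' hC₁0).congr'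
    (eventually_mem_nhdsWithin.mono fun V hV ↦ (hG V hV).symm)
  obtain ⟨Vs, hVs, hGVs, hbelow, habove⟩ := exists_level_crossing_of_peak hV₂.1 hV₂.2 hG'
    (fun x hx ↦ div_pos (mul_pos hx.1 (hpos x hx)) (pow_pos hk 2))
    (fun x hx ↦ div_neg_of_neg_of_pos (mul_neg_of_pos_of_neg (hV₂.1.trans hx.1) (hneg x hx))
      (pow_pos hk 2)) hGlim
  refine ⟨?_, V₂, hV₂, by rw [hgV V₂ hV₂.1, hzero₂, mul_zero], fun V hV hgV0 ↦ hzeros V hV ?_,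
    Vs, hVs, hGVs, hbelow, habove⟩
  · rw [hg'.deriv, hzero, mul_zero, zero_add]
    exact mul_pos hVp (div_pos (by linarith) (by positivity))
  · rw [hgV V hV] at hgV0
    exact (mul_eq_zero.1 hgV0).resolve_left hV.ne'
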